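/- arXiv:2104.02298 — 6 statements merged into one kernel-verified Lean document; each statement's English description precedes it below -/
import Mathlib

section
/- For d₁, d₂ > 0 and l ≥ 0 with |d₁ - d₂| ≤ l, the integral ∫₀ˡ 1/min(d₁ + t, d₂ + l - t) dt equals ln((d₁ + d₂ + l)²/(4 d₁ d₂)). -/
open intervalIntegral

/-- Exact evaluation of the integral of the reciprocal of the minimum of the
two linear clearance bounds. -/
theorem integral_reciprocal_min_linear_bounds
    (d₁ d₂ l : ℝ) (hd₁ : 0 < d₁) (hd₂ : 0 < d₂) (hl : 0 ≤ l)
    (hdl : |d₁ - d₂| ≤ l) :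
    ∫ t in (0:ℝ)..l, 1 / min (d₁ + t) (d₂ + l - t) =
      Real.log ((d₁ + d₂ + l) ^ 2 / (4 * d₁ * d₂)) := by
  set te : ℝ := (d₂ - d₁ + l) / 2 with hte
  obtain ⟨hab1, hab2⟩ := abs_le.mp hdl
  have hte0 : 0 ≤ te := by rw [hte]; linarith
  have htel : te ≤ l := by rw [hte]; linarith
  -- on [0, te], min = d₁ + t
  have heq1 : Set.EqOn (fun t => 1 / min (d₁ + t) (d₂ + l - t))
      (fun t => 1 / (t + d₁)) (Set.uIcc 0 te) := by
    intro t ht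
    rw [Set.uIcc_of_le hte0] at ht
    obtain ⟨ht0, htte⟩ := ht
    have : min (d₁ + t) (d₂ + l - t) = d₁ + t := min_eq_left (by rw [hte] at htte; linarith)
    simp only [this, add_comm]
  have heq2 : Set.EqOn (fun t => 1 / min (d₁ + t) (d₂ + l - t))
      (fun t => 1 / ((d₂ + l) - t)) (Set.uIcc te l) := by
    intro t ht
    rw [Set.uIcc_of_le htel] at ht
    obtain ⟨ht0, htte⟩ := ht
    have : min (d₁ + t) (d₂ + l - t) = d₂ + l - t := min_eq_right (by rw [hte] at ht0; linarith)
    simp only [this]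
  have hcont : ∀ a b : ℝ, 0 ≤ a → a ≤ b → b ≤ l → IntervalIntegrable
      (fun t => 1 / min (d₁ + t) (d₂ + l - t)) MeasureTheory.volume a b := by
    intro a b ha hab hb
    apply ContinuousOn.intervalIntegrable
    apply ContinuousOn.div continuousOn_const
    · exact ((continuous_const.add continuous_id).min
        ((continuous_const.sub continuous_id))).continuousOn
    · intro t ht
      rw [Set.uIcc_of_le hab] at ht
      have h0 : 0 ≤ t := ha.trans ht.1
      have h1 : t ≤ l := ht.2.trans hb
      have : (0:ℝ) < min (d₁ + t) (d₂ + l - t) := lt_min (by linarith) (by linarith)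
      exact ne_of_gt this
  rw [← integral_add_adjacent_intervals (hcont 0 te le_rfl hte0 htel)
      (hcont te l hte0 htel le_rfl),
    integral_congr heq1, integral_congr heq2]
  have hs : (0:ℝ) < (d₁ + d₂ + l) / 2 := by linarith
  have e1 : (∫ t in (0:ℝ)..te, 1 / (t + d₁)) = Real.log (((d₁ + d₂ + l)/2) / d₁) := by
    rw [intervalIntegral.integral_comp_add_right (fun x => 1 / x) d₁,
      integral_one_div]
    · norm_num
      congr 1
      rw [hte]; ring
    · intro h
      rw [Set.uIcc_of_le (by linarith : 0 + d₁ ≤ te + d₁)] at h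
      linarith [h.1]
  have e2 : (∫ t in te..l, 1 / ((d₂ + l) - t)) = Real.log (((d₁ + d₂ + l)/2) / d₂) := by
    rw [intervalIntegral.integral_comp_sub_left (fun x => 1 / x) (d₂ + l),
      integral_one_div]
    · norm_num
      congr 1
      rw [hte]; ring
    · intro h
      rw [Set.uIcc_of_le (by linarith : d₂ + l - l ≤ d₂ + l - te)] at h
      have := h.1
      simp at this
      linarith
  rw [e1, e2, ← Real.log_mul (by positivity) (by positivity)]
  congr 1
  field_simp
  ring
end

section
/- Let d₁ > 0, l ≥ 0 and 0 ≤ t₁ ≤ l. If ξ : [0,l] → (0,∞) is measurable and satisfies ξ(t) ≤ d₁ + |t₁ - t| for all t ∈ [0,l], then ∫₀ˡ 1/ξ(t) dt ≥ ln((d₁ + t₁)/d₁) + ln((d₁ + l - t₁)/d₁). -/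
open MeasureTheory

lemma aux_cont (d₁ t₁ : ℝ) (hd₁ : 0 < d₁) :
    Continuous (fun t : ℝ => 1 / (d₁ + |t₁ - t|)) := by
  apply Continuous.div continuous_const
  · exact continuous_const.add ((continuous_const.sub continuous_id).abs)
  · intro t
    have : 0 ≤ |t₁ - t| := abs_nonneg _
    positivity

/-- Lemma 3: a path-cost lower bound when the clearance of one state at
arc length `t₁` along the path is known. -/
theorem path_cost_lower_bound_single_state
    (d₁ l t₁ : ℝ) (hd₁ : 0 < d₁) (hl : 0 ≤ l)
    (ht₁ : t₁ ∈ Set.Icc 0 l)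
    (ξ : ℝ → ℝ) (hmeas : Measurable ξ)
    (hpos : ∀ t ∈ Set.Icc 0 l, 0 < ξ t)
    (hub : ∀ t ∈ Set.Icc 0 l, ξ t ≤ d₁ + |t₁ - t|) :
    ENNReal.ofReal (Real.log ((d₁ + t₁) / d₁) + Real.log ((d₁ + l - t₁) / d₁)) ≤
      ∫⁻ t in Set.Icc 0 l, ENNReal.ofReal (1 / ξ t) := by
  obtain ⟨ht₁0, ht₁l⟩ := ht₁
  set g : ℝ → ℝ := fun t => 1 / (d₁ + |t₁ - t|) with hg
  have hgcont : Continuous g := aux_cont d₁ t₁ hd₁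
  have hgpos : ∀ t, 0 < g t := by
    intro t
    have : 0 ≤ |t₁ - t| := abs_nonneg _
    simp only [hg]
    positivity
  -- Step 1: pointwise bound
  have step1 : (∫⁻ t in Set.Icc 0 l, ENNReal.ofReal (g t)) ≤
      ∫⁻ t in Set.Icc 0 l, ENNReal.ofReal (1 / ξ t) := by
    apply setLIntegral_mono (by measurability)
    intro t ht
    apply ENNReal.ofReal_le_ofReal
    exact one_div_le_one_div_of_le (hpos t ht) (hub t ht)
  -- Step 2: lintegral of g = ofReal of integral of g
  have hgint : IntegrableOn g (Set.Icc 0 l) := hgcont.integrableOn_Icc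
  have step2 : (∫⁻ t in Set.Icc 0 l, ENNReal.ofReal (g t)) =
      ENNReal.ofReal (∫ t in Set.Icc 0 l, g t) := by
    rw [← ofReal_integral_eq_lintegral_ofReal hgint
      (Filter.Eventually.of_forall fun t => (hgpos t).le)]
  -- Step 3: compute the integral
  have hsplit : (∫ t in Set.Icc 0 l, g t) =
      Real.log ((d₁ + t₁) / d₁) + Real.log ((d₁ + l - t₁) / d₁) := by
    rw [MeasureTheory.integral_Icc_eq_integral_Ioc,
      ← intervalIntegral.integral_of_le hl]
    have hI1 : IntervalIntegrable g volume 0 t₁ :=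
      hgcont.intervalIntegrable _ _
    have hI2 : IntervalIntegrable g volume t₁ l :=
      hgcont.intervalIntegrable _ _
    rw [← intervalIntegral.integral_add_adjacent_intervals hI1 hI2]
    have h1 : (∫ t in (0:ℝ)..t₁, g t) = Real.log ((d₁ + t₁) / d₁) := by
      have : ∀ t ∈ Set.uIcc (0:ℝ) t₁, g t = 1 / (d₁ + t₁ - t) := by
        intro t ht
        rw [Set.uIcc_of_le ht₁0] at ht
        have h1 : t ≤ t₁ := ht.2
        simp only [hg]
        rw [abs_of_nonneg (by linarith)]
        ring_nf
      rw [intervalIntegral.integral_congr this]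
      have hcomp : (∫ t in (0:ℝ)..t₁, 1 / (d₁ + t₁ - t)) =
          ∫ x in (d₁ + t₁ - t₁)..(d₁ + t₁ - 0), 1 / x := by
        rw [← intervalIntegral.integral_comp_sub_left (fun x => 1 / x) (d₁ + t₁)]
      rw [hcomp]
      have : d₁ + t₁ - t₁ = d₁ := by ring
      rw [this, sub_zero, integral_one_div]
      intro h
      rw [Set.uIcc_of_le (by linarith)] at h
      have := h.1; linarith [h.1]
    have h2 : (∫ t in t₁..l, g t) = Real.log ((d₁ + l - t₁) / d₁) := by
      have : ∀ t ∈ Set.uIcc t₁ l, g t = 1 / (t + (d₁ - t₁)) := by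
        intro t ht
        rw [Set.uIcc_of_le ht₁l] at ht
        have h1 : t₁ ≤ t := ht.1
        simp only [hg]
        rw [abs_of_nonpos (by linarith)]
        ring_nf
      rw [intervalIntegral.integral_congr this]
      have hcomp : (∫ t in t₁..l, 1 / (t + (d₁ - t₁))) =
          ∫ x in (t₁ + (d₁ - t₁))..(l + (d₁ - t₁)), 1 / x := by
        rw [← intervalIntegral.integral_comp_add_right (fun x => 1 / x) (d₁ - t₁)]
      rw [hcomp]
      have e1 : t₁ + (d₁ - t₁) = d₁ := by ring
      have e2 : l + (d₁ - t₁) = d₁ + l - t₁ := by ring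
      rw [e1, e2, integral_one_div]
      intro h
      rw [Set.uIcc_of_le (by linarith)] at h
      linarith [h.1]
    rw [h1, h2]
  calc ENNReal.ofReal (Real.log ((d₁ + t₁) / d₁) + Real.log ((d₁ + l - t₁) / d₁))
      = ∫⁻ t in Set.Icc 0 l, ENNReal.ofReal (g t) := by rw [step2, hsplit]
    _ ≤ _ := step1
end

section
/- Let l ≥ 0, let 0 ≤ t₁ < t₂ < ⋯ < tₙ ≤ l (n ≥ 1), and let d₁, …, dₙ > 0. Suppose ξ : [0,l] → (0,∞) is measurable with ξ(tᵢ) = dᵢ and ξ is 1-Lipschitz (so ξ(t) ≤ dᵢ + |tᵢ - t| for each i). Then ∫₀ˡ 1/ξ(t) dt ≥ ln((d₁ + t₁)/d₁) + Σ_{i=1}^{n-1} ln((dᵢ + dᵢ₊₁ + tᵢ₊₁ - tᵢ)²/(4 dᵢ dᵢ₊₁)) + ln((dₙ + l - tₙ)/dₙ). -/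
open MeasureTheory Set

lemma intInt_right (a b e : ℝ) (hab : a ≤ b) (he : 0 < e) :
    ∫ s in a..b, 1 / (e + (s - a)) = Real.log ((e + (b - a)) / e) := by
  have h1 : (∫ s in a..b, 1 / (e + (s - a)))
      = ∫ s in a..b, (fun x => 1 / x) (s + (e - a)) := by
    congr 1; funext s; simp only [one_div]; ring_nf
  rw [h1, intervalIntegral.integral_comp_add_right (fun x => 1 / x) (e - a),
    integral_one_div_of_pos (by linarith) (by linarith)]
  congr 1; ring

lemma intInt_left (a b e : ℝ) (hab : a ≤ b) (he : 0 < e) :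
    ∫ s in a..b, 1 / (e + (b - s)) = Real.log ((e + (b - a)) / e) := by
  have h1 : (∫ s in a..b, 1 / (e + (b - s)))
      = ∫ s in a..b, (fun x => 1 / (e + b + x)) (-s) := by
    congr 1; funext s; simp only [one_div]; ring_nf
  rw [h1, intervalIntegral.integral_comp_neg (fun x => 1 / (e + b + x))]
  have h2 : (∫ x in (-b)..(-a), 1 / (e + b + x))
      = ∫ x in (-b)..(-a), (fun y => 1 / y) (x + (e + b)) := by
    congr 1; funext x; simp only [one_div]; ring_nf
  rw [h2, intervalIntegral.integral_comp_add_right (fun y => 1 / y) (e + b),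
    integral_one_div_of_pos (by linarith) (by linarith)]
  congr 1; ring

lemma lint_of_intInt (a b : ℝ) (g : ℝ → ℝ) (hab : a ≤ b)
    (hcont : ContinuousOn g (Set.Icc a b))
    (hnn : ∀ s ∈ Set.Icc a b, 0 ≤ g s) :
    ∫⁻ s in Set.Icc a b, ENNReal.ofReal (g s) =
      ENNReal.ofReal (∫ s in a..b, g s) := by
  have hint : IntegrableOn g (Set.Icc a b) := hcont.integrableOn_Icc
  rw [← MeasureTheory.ofReal_integral_eq_lintegral_ofReal hint]
  · congr 1
    rw [intervalIntegral.integral_of_le hab, integral_Icc_eq_integral_Ioc]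
  · filter_upwards [ae_restrict_mem measurableSet_Icc] with s hs
    exact hnn s hs

-- pointwise comparison + computation, right version (bound e + (s-a))
lemma seg_right (a b e : ℝ) (hab : a ≤ b) (he : 0 < e)
    (ξ : ℝ → ℝ)
    (h : ∀ s ∈ Set.Icc a b, 0 < ξ s ∧ ξ s ≤ e + (s - a)) :
    ENNReal.ofReal (Real.log ((e + (b - a)) / e)) ≤
      ∫⁻ s in Set.Icc a b, ENNReal.ofReal (1 / ξ s) := by
  rw [← intInt_right a b e hab he,
    ← lint_of_intInt a b _ hab (by
      apply ContinuousOn.div continuousOn_const (by fun_prop)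
      intro s hs; have := hs.1; intro h0; nlinarith)
      (fun s hs => by
        have h1 := hs.1
        have h2 : (0:ℝ) < e + (s - a) := by linarith
        positivity)]
  apply setLIntegral_mono_ae' measurableSet_Icc
  filter_upwards with s
  intro hs
  obtain ⟨h1, h2⟩ := h s hs
  apply ENNReal.ofReal_le_ofReal
  apply one_div_le_one_div_of_le h1 h2

lemma seg_left (a b e : ℝ) (hab : a ≤ b) (he : 0 < e)
    (ξ : ℝ → ℝ)
    (h : ∀ s ∈ Set.Icc a b, 0 < ξ s ∧ ξ s ≤ e + (b - s)) :
    ENNReal.ofReal (Real.log ((e + (b - a)) / e)) ≤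
      ∫⁻ s in Set.Icc a b, ENNReal.ofReal (1 / ξ s) := by
  rw [← intInt_left a b e hab he,
    ← lint_of_intInt a b _ hab (by
      apply ContinuousOn.div continuousOn_const (by fun_prop)
      intro s hs; have := hs.2; intro h0; nlinarith)
      (fun s hs => by
        have h1 := hs.2
        have h2 : (0:ℝ) < e + (b - s) := by linarith
        positivity)]
  apply setLIntegral_mono_ae' measurableSet_Icc
  filter_upwards with s
  intro hs
  obtain ⟨h1, h2⟩ := h s hs
  apply ENNReal.ofReal_le_ofReal
  apply one_div_le_one_div_of_le h1 h2

lemma lint_split (a m b : ℝ) (ham : a ≤ m) (hmb : m ≤ b) (f : ℝ → ENNReal) :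
    (∫⁻ s in Set.Icc a m, f s) + ∫⁻ s in Set.Icc m b, f s =
      ∫⁻ s in Set.Icc a b, f s := by
  have h1 : (∫⁻ s in Set.Icc m b, f s) = ∫⁻ s in Set.Ioc m b, f s := by
    rw [Measure.restrict_congr_set Ioc_ae_eq_Icc]
  have hdisj : Disjoint (Set.Icc a m) (Set.Ioc m b) := by
    rw [Set.disjoint_left]
    intro x hx hx'
    exact absurd hx.2 (not_le.mpr hx'.1)
  rw [h1, ← lintegral_union measurableSet_Ioc hdisj,
    Set.Icc_union_Ioc_eq_Icc ham hmb]

lemma seg_two (a b da db : ℝ) (hab : a ≤ b) (hda : 0 < da) (hdb : 0 < db)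
    (hba : db ≤ da + (b - a)) (hab' : da ≤ db + (b - a))
    (ξ : ℝ → ℝ)
    (h : ∀ s ∈ Set.Icc a b, 0 < ξ s ∧ ξ s ≤ da + (s - a) ∧ ξ s ≤ db + (b - s)) :
    ENNReal.ofReal (Real.log ((da + db + (b - a)) ^ 2 / (4 * da * db))) ≤
      ∫⁻ s in Set.Icc a b, ENNReal.ofReal (1 / ξ s) := by
  set m := (a + b + db - da) / 2 with hm
  have ham : a ≤ m := by rw [hm]; linarith
  have hmb : m ≤ b := by rw [hm]; linarith
  have hpos1 : (0:ℝ) < da + (m - a) := by rw [hm]; linarith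
  have hpos2 : (0:ℝ) < db + (b - m) := by rw [hm]; linarith
  have hlog : Real.log ((da + db + (b - a)) ^ 2 / (4 * da * db))
      = Real.log ((da + (m - a)) / da) + Real.log ((db + (b - m)) / db) := by
    have e1 : (da + db + (b - a)) ^ 2 / (4 * da * db)
        = ((da + (m - a)) / da) * ((db + (b - m)) / db) := by
      rw [hm]; field_simp; ring
    rw [e1, Real.log_mul (by positivity) (by positivity)]
  rw [hlog, ← lint_split a m b ham hmb]
  refine le_trans ENNReal.ofReal_add_le (add_le_add ?_ ?_)
  · exact seg_right a m da ham hda ξ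
      (fun s hs => ⟨(h s ⟨hs.1, hs.2.trans hmb⟩).1, (h s ⟨hs.1, hs.2.trans hmb⟩).2.1⟩)
  · exact seg_left m b db hmb hdb ξ
      (fun s hs => ⟨(h s ⟨ham.trans hs.1, hs.2⟩).1, (h s ⟨ham.trans hs.1, hs.2⟩).2.2⟩)

/-- Theorem 2: a path-cost lower bound when the clearance of `n` states along
the path is known. -/
theorem path_cost_lower_bound_many_states
    (l : ℝ) (hl : 0 ≤ l) (n : ℕ) (hn : 1 ≤ n)
    (t d : ℕ → ℝ)
    (hmono : ∀ i, i + 1 < n → t i < t (i + 1))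
    (ht0 : 0 ≤ t 0) (htn : t (n - 1) ≤ l)
    (hd : ∀ i, i < n → 0 < d i)
    (ξ : ℝ → ℝ) (hmeas : Measurable ξ)
    (hpos : ∀ s ∈ Set.Icc 0 l, 0 < ξ s)
    (hlip : LipschitzOnWith 1 ξ (Set.Icc 0 l))
    (hval : ∀ i, i < n → ξ (t i) = d i) :
    ENNReal.ofReal
        (Real.log ((d 0 + t 0) / d 0) +
          ∑ i ∈ Finset.range (n - 1),
            Real.log ((d i + d (i + 1) + t (i + 1) - t i) ^ 2 /
              (4 * d i * d (i + 1))) +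
          Real.log ((d (n - 1) + l - t (n - 1)) / d (n - 1))) ≤
      ∫⁻ s in Set.Icc 0 l, ENNReal.ofReal (1 / ξ s) := by
  have tmono : ∀ j, j < n → ∀ i, i ≤ j → t i ≤ t j := by
    intro j
    induction j with
    | zero => intro _ i hi; interval_cases i; exact le_rfl
    | succ k ih =>
      intro hk i hi
      rcases Nat.eq_or_lt_of_le hi with h | h
      · rw [h]
      · exact le_trans (ih (by omega) i (by omega)) (le_of_lt (hmono k hk))
  have htmem : ∀ i, i < n → t i ∈ Set.Icc (0:ℝ) l := by
    intro i hi
    refine ⟨le_trans ht0 (tmono i hi 0 (Nat.zero_le _)), ?_⟩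
    exact le_trans (tmono (n - 1) (by omega) i (by omega)) htn
  have hbound : ∀ i, i < n → ∀ s ∈ Set.Icc (0:ℝ) l, ξ s ≤ d i + |s - t i| := by
    intro i hi s hs
    have h1 := LipschitzOnWith.dist_le_mul hlip s hs (t i) (htmem i hi)
    rw [hval i hi] at h1
    simp only [Real.dist_eq, NNReal.coe_one, one_mul] at h1
    have h2 := le_abs_self (ξ s - d i)
    linarith [h1, h2]
  have key : ∀ k, k < n →
      ENNReal.ofReal (Real.log ((d 0 + t 0) / d 0) +
        ∑ i ∈ Finset.range k,
          Real.log ((d i + d (i + 1) + t (i + 1) - t i) ^ 2 /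
            (4 * d i * d (i + 1)))) ≤
        ∫⁻ s in Set.Icc 0 (t k), ENNReal.ofReal (1 / ξ s) := by
    intro k
    induction k with
    | zero =>
      intro hk
      simp only [Finset.range_zero, Finset.sum_empty, add_zero]
      have ht0l : t 0 ≤ l := (htmem 0 hk).2
      have hb : ∀ s ∈ Set.Icc (0:ℝ) (t 0), 0 < ξ s ∧ ξ s ≤ d 0 + (t 0 - s) := by
        intro s hs
        have hsl : s ∈ Set.Icc (0:ℝ) l := ⟨hs.1, hs.2.trans ht0l⟩
        refine ⟨hpos s hsl, ?_⟩
        have h1 := hbound 0 hk s hsl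
        have h2 : |s - t 0| = t 0 - s := by
          rw [abs_sub_comm]; exact abs_of_nonneg (by linarith [hs.2])
        linarith [h1, h2.symm.le, h2.le]
      have := seg_left 0 (t 0) (d 0) ht0 (hd 0 hk) ξ hb
      simpa using this
    | succ k ih =>
      intro hk
      have hkn : k < n := by omega
      have ihr := ih hkn
      have htk1 : t (k + 1) ≤ l := (htmem (k + 1) hk).2
      have htk0 : 0 ≤ t k := (htmem k hkn).1
      have hstep : t k ≤ t (k + 1) := le_of_lt (hmono k hk)
      rw [Finset.sum_range_succ, ← add_assoc,
        ← lint_split 0 (t k) (t (k + 1)) htk0 hstep]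
      refine le_trans ENNReal.ofReal_add_le (add_le_add ihr ?_)
      have hsub : ∀ s ∈ Set.Icc (t k) (t (k + 1)), s ∈ Set.Icc (0:ℝ) l :=
        fun s hs => ⟨le_trans htk0 hs.1, hs.2.trans htk1⟩
      have hba : d (k + 1) ≤ d k + (t (k + 1) - t k) := by
        have h1 := hbound k hkn (t (k + 1)) (htmem (k + 1) hk)
        rw [hval (k + 1) hk] at h1
        rw [abs_of_nonneg (by linarith)] at h1
        linarith
      have hab' : d k ≤ d (k + 1) + (t (k + 1) - t k) := by
        have h1 := hbound (k + 1) hk (t k) (htmem k hkn)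
        rw [hval k hkn] at h1
        rw [abs_of_nonpos (by linarith)] at h1
        linarith
      have hb : ∀ s ∈ Set.Icc (t k) (t (k + 1)),
          0 < ξ s ∧ ξ s ≤ d k + (s - t k) ∧ ξ s ≤ d (k + 1) + (t (k + 1) - s) := by
        intro s hs
        have hsl := hsub s hs
        refine ⟨hpos s hsl, ?_, ?_⟩
        · have h1 := hbound k hkn s hsl
          rw [abs_of_nonneg (by linarith [hs.1])] at h1
          linarith
        · have h1 := hbound (k + 1) hk s hsl
          rw [abs_of_nonpos (by linarith [hs.2])] at h1
          linarith
      have hseg := seg_two (t k) (t (k + 1)) (d k) (d (k + 1)) hstep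
        (hd k hkn) (hd (k + 1) hk) hba hab' ξ hb
      have heq : (d k + d (k + 1) + t (k + 1) - t k)
          = d k + d (k + 1) + (t (k + 1) - t k) := by ring
      rw [heq]
      exact hseg
  have hkey := key (n - 1) (by omega)
  rw [← lint_split 0 (t (n - 1)) l (htmem (n - 1) (by omega)).1 htn]
  refine le_trans ENNReal.ofReal_add_le (add_le_add hkey ?_)
  have hb : ∀ s ∈ Set.Icc (t (n - 1)) l,
      0 < ξ s ∧ ξ s ≤ d (n - 1) + (s - t (n - 1)) := by
    intro s hs
    have hsl : s ∈ Set.Icc (0:ℝ) l := ⟨le_trans (htmem (n - 1) (by omega)).1 hs.1, hs.2⟩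
    refine ⟨hpos s hsl, ?_⟩
    have h1 := hbound (n - 1) (by omega) s hsl
    rw [abs_of_nonneg (by linarith [hs.1])] at h1
    linarith
  have hseg := seg_right (t (n - 1)) l (d (n - 1)) htn (hd (n - 1) (by omega)) ξ hb
  have heq : d (n - 1) + l - t (n - 1) = d (n - 1) + (l - t (n - 1)) := by ring
  rw [heq]
  exact hseg
end

section
/- Let l ≥ 0, let 0 = t₁ < t₂ < ⋯ < tₙ = l (n ≥ 2), and d₁, …, dₙ > 0. If ξ : [0,l] → (0,∞) is measurable, 1-Lipschitz, and ξ(tᵢ) = dᵢ for all i, then ∫₀ˡ 1/ξ(t) dt ≥ Σ_{i=1}^{n-1} ln((dᵢ + dᵢ₊₁ + tᵢ₊₁ - tᵢ)²/(4 dᵢ dᵢ₊₁)). -/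
open MeasureTheory

lemma seg_bound (a b da db : ℝ) (hab : a ≤ b) (hda : 0 < da) (hdb : 0 < db)
    (ξ : ℝ → ℝ)
    (hpos : ∀ s ∈ Set.Icc a b, 0 < ξ s)
    (hlip : LipschitzOnWith 1 ξ (Set.Icc a b))
    (ha : ξ a = da) (hb : ξ b = db) :
    ENNReal.ofReal (Real.log ((da + db + b - a) ^ 2 / (4 * da * db))) ≤
      ∫⁻ s in Set.Ioc a b, ENNReal.ofReal (1 / ξ s) := by
  set m : ℝ := (a + b + db - da) / 2 with hm
  have haIcc : a ∈ Set.Icc a b := Set.left_mem_Icc.2 hab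
  have hbIcc : b ∈ Set.Icc a b := Set.right_mem_Icc.2 hab
  have hdist : |da - db| ≤ b - a := by
    have := hlip.dist_le_mul a haIcc b hbIcc
    rw [Real.dist_eq, Real.dist_eq, ha, hb] at this
    simpa [abs_of_nonpos (sub_nonpos.2 hab), one_mul] using this
  have hdab : da - db ≤ b - a := (le_abs_self _).trans hdist
  have hdba : db - da ≤ b - a := (le_abs_self _).trans (by rwa [abs_sub_comm] at hdist)
  have ham : a ≤ m := by rw [hm]; linarith
  have hmb : m ≤ b := by rw [hm]; linarith
  set S : ℝ := (da + db + (b - a)) / 2 with hSdef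
  have hS : m + (da - a) = S := by rw [hm, hSdef]; ring
  have hS' : b + db - m = S := by rw [hm, hSdef]; ring
  have hSpos : 0 < S := by rw [hSdef]; linarith
  have hSda : da ≤ S := by rw [hSdef]; linarith
  have hSdb : db ≤ S := by rw [hSdef]; linarith
  -- pointwise bounds
  have hptL : ∀ s ∈ Set.Ioc a m, ENNReal.ofReal (1 / (s + (da - a))) ≤ ENNReal.ofReal (1 / ξ s) := by
    intro s hs
    have hsIcc : s ∈ Set.Icc a b := ⟨hs.1.le, hs.2.trans hmb⟩
    have hξ : ξ s ≤ s + (da - a) := by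
      have := hlip.dist_le_mul s hsIcc a haIcc
      rw [Real.dist_eq, Real.dist_eq, ha] at this
      simp only [NNReal.coe_one, one_mul] at this
      rw [abs_of_nonneg (sub_nonneg.2 hs.1.le)] at this
      have h2 := (le_abs_self (ξ s - da)).trans this
      linarith
    exact ENNReal.ofReal_le_ofReal (one_div_le_one_div_of_le (hpos s hsIcc) hξ)
  have hptR : ∀ s ∈ Set.Ioc m b, ENNReal.ofReal (1 / (b + db - s)) ≤ ENNReal.ofReal (1 / ξ s) := by
    intro s hs
    have hsIcc : s ∈ Set.Icc a b := ⟨ham.trans hs.1.le, hs.2⟩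
    have hξ : ξ s ≤ b + db - s := by
      have := hlip.dist_le_mul s hsIcc b hbIcc
      rw [Real.dist_eq, Real.dist_eq, hb] at this
      simp only [NNReal.coe_one, one_mul] at this
      rw [abs_of_nonpos (sub_nonpos.2 hs.2)] at this
      have h2 := (le_abs_self (ξ s - db)).trans this
      linarith
    exact ENNReal.ofReal_le_ofReal (one_div_le_one_div_of_le (hpos s hsIcc) hξ)
  -- split the integral
  have hunion : Set.Ioc a m ∪ Set.Ioc m b = Set.Ioc a b := Set.Ioc_union_Ioc_eq_Ioc ham hmb
  have hdisj : Disjoint (Set.Ioc a m) (Set.Ioc m b) := by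
    apply Set.disjoint_left.2
    rintro x ⟨_, hxm⟩ ⟨hmx, _⟩
    exact absurd hxm (not_le.2 hmx)
  have hsplit : (∫⁻ s in Set.Ioc a m, ENNReal.ofReal (1 / (s + (da - a)))) +
      (∫⁻ s in Set.Ioc m b, ENNReal.ofReal (1 / (b + db - s))) ≤
      ∫⁻ s in Set.Ioc a b, ENNReal.ofReal (1 / ξ s) := by
    rw [← hunion, lintegral_union measurableSet_Ioc hdisj]
    exact add_le_add (setLIntegral_mono' measurableSet_Ioc hptL)
      (setLIntegral_mono' measurableSet_Ioc hptR)
  refine le_trans ?_ hsplit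
  -- compute left integral
  have hcontL : ContinuousOn (fun s : ℝ => 1 / (s + (da - a))) (Set.Icc a m) := by
    apply ContinuousOn.div continuousOn_const
      (continuousOn_id.add continuousOn_const)
    intro x hx
    have : da ≤ x + (da - a) := by linarith [hx.1]
    exact ne_of_gt (lt_of_lt_of_le hda this)
  have hintL : IntegrableOn (fun s : ℝ => 1 / (s + (da - a))) (Set.Ioc a m) := by
    exact (hcontL.integrableOn_Icc).mono_set Set.Ioc_subset_Icc_self
  have hL : (∫⁻ s in Set.Ioc a m, ENNReal.ofReal (1 / (s + (da - a)))) =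
      ENNReal.ofReal (Real.log (S / da)) := by
    rw [← ofReal_integral_eq_lintegral_ofReal hintL]
    · congr 1
      rw [← intervalIntegral.integral_of_le ham]
      have : (∫ s in a..m, 1 / (s + (da - a))) = ∫ s in a..m, (s + (da - a))⁻¹ := by
        simp [one_div]
      rw [this, intervalIntegral.integral_comp_add_right (fun u => u⁻¹) (da - a)]
      have h1 : a + (da - a) = da := by ring
      rw [h1, hS, integral_inv_of_pos hda hSpos]
    · filter_upwards [ae_restrict_mem measurableSet_Ioc] with x hx
      have h0 : (0:ℝ) < x + (da - a) := by linarith [hx.1.le]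
      exact (div_pos one_pos h0).le
  -- compute right integral
  have hcontR : ContinuousOn (fun s : ℝ => 1 / (b + db - s)) (Set.Icc m b) := by
    apply ContinuousOn.div continuousOn_const
      (continuousOn_const.sub continuousOn_id)
    intro x hx
    have : db ≤ b + db - x := by linarith [hx.2]
    exact ne_of_gt (lt_of_lt_of_le hdb this)
  have hintR : IntegrableOn (fun s : ℝ => 1 / (b + db - s)) (Set.Ioc m b) := by
    exact (hcontR.integrableOn_Icc).mono_set Set.Ioc_subset_Icc_self
  have hR : (∫⁻ s in Set.Ioc m b, ENNReal.ofReal (1 / (b + db - s))) =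
      ENNReal.ofReal (Real.log (S / db)) := by
    rw [← ofReal_integral_eq_lintegral_ofReal hintR]
    · congr 1
      rw [← intervalIntegral.integral_of_le hmb]
      have : (∫ s in m..b, 1 / (b + db - s)) = ∫ s in m..b, ((b + db) - s)⁻¹ := by
        simp [one_div]
      rw [this, intervalIntegral.integral_comp_sub_left (fun u => u⁻¹) (b + db)]
      have h1 : b + db - b = db := by ring
      rw [h1, hS', integral_inv_of_pos hdb hSpos]
    · filter_upwards [ae_restrict_mem measurableSet_Ioc] with x hx
      have h0 : (0:ℝ) < b + db - x := by linarith [hx.2]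
      exact (div_pos one_pos h0).le
  rw [hL, hR, ← ENNReal.ofReal_add (Real.log_nonneg (by
      rw [le_div_iff₀ hda]; linarith)) (Real.log_nonneg (by
      rw [le_div_iff₀ hdb]; linarith))]
  apply ENNReal.ofReal_le_ofReal
  have harg : (da + db + b - a) ^ 2 / (4 * da * db) = (S / da) * (S / db) := by
    rw [hSdef]; field_simp; ring
  rw [harg, Real.log_mul (by positivity) (by positivity)]

/-- Corollary 1: a path-cost lower bound when the clearance of the end states
and of intermediate states of the path is known. -/
theorem path_cost_lower_bound_with_end_states
    (l : ℝ) (hl : 0 ≤ l) (n : ℕ) (hn : 2 ≤ n)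
    (t d : ℕ → ℝ)
    (hmono : ∀ i, i + 1 < n → t i < t (i + 1))
    (ht0 : t 0 = 0) (htn : t (n - 1) = l)
    (hd : ∀ i, i < n → 0 < d i)
    (ξ : ℝ → ℝ) (hmeas : Measurable ξ)
    (hpos : ∀ s ∈ Set.Icc 0 l, 0 < ξ s)
    (hlip : LipschitzOnWith 1 ξ (Set.Icc 0 l))
    (hval : ∀ i, i < n → ξ (t i) = d i) :
    ENNReal.ofReal
        (∑ i ∈ Finset.range (n - 1),
          Real.log ((d i + d (i + 1) + t (i + 1) - t i) ^ 2 /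
            (4 * d i * d (i + 1)))) ≤
      ∫⁻ s in Set.Icc 0 l, ENNReal.ofReal (1 / ξ s) := by
  -- monotonicity of t
  have hmono' : ∀ i j, i ≤ j → j < n → t i ≤ t j := by
    intro i j hij hj
    induction j with
    | zero => simp_all
    | succ k ih =>
      rcases Nat.eq_or_lt_of_le hij with h | h
      · rw [h]
      · exact (ih (Nat.lt_succ_iff.1 h) (Nat.lt_of_succ_lt hj)).trans
          (hmono k hj).le
  have htlo : ∀ i, i < n → 0 ≤ t i := by
    intro i hi; rw [← ht0]; exact hmono' 0 i (Nat.zero_le i) hi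
  have hthi : ∀ i, i < n → t i ≤ l := by
    intro i hi; rw [← htn]
    exact hmono' i (n - 1) (Nat.le_sub_one_of_lt hi) (Nat.sub_lt (by omega) one_pos)
  -- per-segment bound
  have hseg : ∀ i ∈ Finset.range (n - 1),
      ENNReal.ofReal (Real.log ((d i + d (i + 1) + t (i + 1) - t i) ^ 2 /
        (4 * d i * d (i + 1)))) ≤
      ∫⁻ s in Set.Ioc (t i) (t (i + 1)), ENNReal.ofReal (1 / ξ s) := by
    intro i hi
    rw [Finset.mem_range] at hi
    have hi1 : i + 1 < n := by omega
    have hsub : Set.Icc (t i) (t (i + 1)) ⊆ Set.Icc 0 l := by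
      apply Set.Icc_subset_Icc (htlo i (by omega)) (hthi (i + 1) hi1)
    exact seg_bound (t i) (t (i + 1)) (d i) (d (i + 1)) (hmono i hi1).le
      (hd i (by omega)) (hd (i + 1) hi1) ξ
      (fun s hs => hpos s (hsub hs)) (hlip.mono hsub)
      (hval i (by omega)) (hval (i + 1) hi1)
  -- sum of segment integrals equals integral over Ioc (t 0) (t (n-1))
  have hsum : ∀ k, k ≤ n - 1 →
      (∑ i ∈ Finset.range k, ∫⁻ s in Set.Ioc (t i) (t (i + 1)),
        ENNReal.ofReal (1 / ξ s)) =
      ∫⁻ s in Set.Ioc (t 0) (t k), ENNReal.ofReal (1 / ξ s) := by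
    intro k hk
    induction k with
    | zero => simp
    | succ j ih =>
      rw [Finset.sum_range_succ, ih (by omega)]
      have h0j : t 0 ≤ t j := hmono' 0 j (Nat.zero_le j) (by omega)
      have hjj : t j ≤ t (j + 1) := (hmono j (by omega)).le
      rw [← lintegral_union measurableSet_Ioc (by
        apply Set.disjoint_left.2
        rintro x ⟨_, hxm⟩ ⟨hmx, _⟩
        exact absurd hxm (not_le.2 hmx)),
        Set.Ioc_union_Ioc_eq_Ioc h0j hjj]
  calc ENNReal.ofReal (∑ i ∈ Finset.range (n - 1),
          Real.log ((d i + d (i + 1) + t (i + 1) - t i) ^ 2 /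
            (4 * d i * d (i + 1))))
      ≤ ∑ i ∈ Finset.range (n - 1),
          ENNReal.ofReal (Real.log ((d i + d (i + 1) + t (i + 1) - t i) ^ 2 /
            (4 * d i * d (i + 1)))) := by
        rw [ENNReal.ofReal_sum_of_nonneg]
        intro i hi
        rw [Finset.mem_range] at hi
        have h1 : 0 < d i := hd i (by omega)
        have h2 : 0 < d (i + 1) := hd (i + 1) (by omega)
        have h3 : t i < t (i + 1) := hmono i (by omega)
        apply Real.log_nonneg
        rw [le_div_iff₀ (by positivity)]
        nlinarith [sq_nonneg (d i - d (i + 1)), sq_nonneg (d i + d (i + 1))]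
    _ ≤ ∑ i ∈ Finset.range (n - 1), ∫⁻ s in Set.Ioc (t i) (t (i + 1)),
          ENNReal.ofReal (1 / ξ s) := Finset.sum_le_sum hseg
    _ = ∫⁻ s in Set.Ioc (t 0) (t (n - 1)), ENNReal.ofReal (1 / ξ s) :=
        hsum (n - 1) le_rfl
    _ ≤ ∫⁻ s in Set.Icc 0 l, ENNReal.ofReal (1 / ξ s) := by
        rw [ht0, htn]
        exact lintegral_mono_set Set.Ioc_subset_Icc_self
end

section
/- Let f : [0,l] → ℝⁿ be a 1-Lipschitz path in ℝⁿ avoiding a nonempty closed set X_inv (i.e., f(t) ∉ X_inv and dist(f(t), X_inv) > 0 for all t), with d₁ := dist(f(0), X_inv) and d₂ := dist(f(l), X_inv). Then ∫₀ˡ 1/dist(f(t), X_inv) dt ≥ ln((d₁ + d₂ + l)²/(4 d₁ d₂)). -/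
open MeasureTheory

/-- Theorem 1 combined with Lemma 1 for a 1-Lipschitz path in ℝⁿ avoiding a
nonempty closed set of invalid states. -/
theorem solution_cost_lower_bound_euclidean
    (n : ℕ) (Xinv : Set (EuclideanSpace ℝ (Fin n)))
    (hne : Xinv.Nonempty) (hclosed : IsClosed Xinv)
    (l : ℝ) (hl : 0 ≤ l)
    (f : ℝ → EuclideanSpace ℝ (Fin n))
    (hf : LipschitzOnWith 1 f (Set.Icc 0 l))
    (havoid : ∀ t ∈ Set.Icc 0 l, f t ∉ Xinv)
    (hpos : ∀ t ∈ Set.Icc 0 l, 0 < Metric.infDist (f t) Xinv)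
    (d₁ d₂ : ℝ)
    (hd₁ : d₁ = Metric.infDist (f 0) Xinv)
    (hd₂ : d₂ = Metric.infDist (f l) Xinv) :
    Real.log ((d₁ + d₂ + l) ^ 2 / (4 * d₁ * d₂)) ≤
      ∫ t in (0:ℝ)..l, 1 / Metric.infDist (f t) Xinv := by
  set g : ℝ → ℝ := fun t => Metric.infDist (f t) Xinv with hg
  have h0mem : (0:ℝ) ∈ Set.Icc 0 l := ⟨le_refl 0, hl⟩
  have hlmem : l ∈ Set.Icc 0 l := ⟨hl, le_refl l⟩
  have hd₁pos : 0 < d₁ := hd₁ ▸ hpos 0 h0mem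
  have hd₂pos : 0 < d₂ := hd₂ ▸ hpos l hlmem
  -- Lipschitz property of g
  have hglip : ∀ s ∈ Set.Icc 0 l, ∀ t ∈ Set.Icc 0 l, g s ≤ g t + dist s t := by
    intro s hs t ht
    have h1 : g s ≤ g t + dist (f s) (f t) := Metric.infDist_le_infDist_add_dist
    have h2 : dist (f s) (f t) ≤ 1 * dist s t := hf.dist_le_mul s hs t ht
    simpa using h1.trans (by linarith)
  set A : ℝ := d₁ + d₂ + l with hA
  set m : ℝ := (d₂ + l - d₁) / 2 with hm
  have hmA₁ : d₁ + m = A / 2 := by simp [hm, hA]; ring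
  have hmA₂ : d₂ + l - m = A / 2 := by simp [hm, hA]; ring
  have hd₁le : d₁ ≤ d₂ + l := by
    have := hglip 0 h0mem l hlmem
    rw [Real.dist_eq, abs_of_nonpos (by linarith)] at this
    rw [hd₁, hd₂]; simpa [g] using this
  have hd₂le : d₂ ≤ d₁ + l := by
    have := hglip l hlmem 0 h0mem
    rw [Real.dist_eq, abs_of_nonneg (by linarith)] at this
    rw [hd₁, hd₂]; simpa [g] using this
  have hm0 : 0 ≤ m := by simp [hm]; linarith
  have hml : m ≤ l := by simp [hm]; linarith
  have hApos : 0 < A := by simp [hA]; linarith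
  -- pointwise bounds
  have hb₁ : ∀ t ∈ Set.Icc 0 l, g t ≤ d₁ + t := by
    intro t ht
    have := hglip t ht 0 h0mem
    rw [Real.dist_eq, sub_zero, abs_of_nonneg ht.1] at this
    rw [hd₁]; linarith [this]
  have hb₂ : ∀ t ∈ Set.Icc 0 l, g t ≤ d₂ + (l - t) := by
    intro t ht
    have := hglip t ht l hlmem
    rw [Real.dist_eq, abs_of_nonpos (by linarith [ht.2])] at this
    rw [neg_sub] at this
    rw [hd₂]; linarith [this]
  -- integrability
  have hgcont : ContinuousOn g (Set.Icc 0 l) :=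
    (Metric.continuous_infDist_pt Xinv).comp_continuousOn hf.continuousOn
  have hinv_cont : ContinuousOn (fun t => 1 / g t) (Set.Icc 0 l) :=
    continuousOn_const.div hgcont (fun t ht => (hpos t ht).ne')
  have hint : IntervalIntegrable (fun t => 1 / g t) volume 0 l :=
    (hinv_cont.mono (by rw [Set.uIcc_of_le hl])).intervalIntegrable
  have hint1 : IntervalIntegrable (fun t => 1 / g t) volume 0 m :=
    hint.mono_set (by rw [Set.uIcc_of_le hm0, Set.uIcc_of_le hl]; exact Set.Icc_subset_Icc le_rfl hml)
  have hint2 : IntervalIntegrable (fun t => 1 / g t) volume m l :=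
    hint.mono_set (by rw [Set.uIcc_of_le hml, Set.uIcc_of_le hl]; exact Set.Icc_subset_Icc hm0 le_rfl)
  have hca : Continuous (fun t : ℝ => d₁ + t) := by fun_prop
  have hcb : Continuous (fun t : ℝ => d₂ + (l - t)) := by fun_prop
  have hintA : IntervalIntegrable (fun t => 1 / (d₁ + t)) volume 0 m := by
    apply ContinuousOn.intervalIntegrable
    apply continuousOn_const.div hca.continuousOn
    intro t ht
    rw [Set.uIcc_of_le hm0] at ht
    nlinarith [ht.1]
  have hintB : IntervalIntegrable (fun t => 1 / (d₂ + (l - t))) volume m l := by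
    apply ContinuousOn.intervalIntegrable
    apply continuousOn_const.div hcb.continuousOn
    intro t ht
    rw [Set.uIcc_of_le hml] at ht
    nlinarith [ht.2]
  -- piece 1
  have hle1 : (∫ t in (0:ℝ)..m, 1 / (d₁ + t)) ≤ ∫ t in (0:ℝ)..m, 1 / g t := by
    apply intervalIntegral.integral_mono_on hm0 hintA hint1
    intro t ht
    have htl : t ∈ Set.Icc 0 l := Set.Icc_subset_Icc le_rfl hml ht
    have h1 : 0 < g t := hpos t htl
    have h2 : g t ≤ d₁ + t := hb₁ t htl
    exact one_div_le_one_div_of_le h1 h2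
  have hle2 : (∫ t in m..l, 1 / (d₂ + (l - t))) ≤ ∫ t in m..l, 1 / g t := by
    apply intervalIntegral.integral_mono_on hml hintB hint2
    intro t ht
    have htl : t ∈ Set.Icc 0 l := Set.Icc_subset_Icc hm0 le_rfl ht
    exact one_div_le_one_div_of_le (hpos t htl) (hb₂ t htl)
  -- compute piece 1
  have hc1 : (∫ t in (0:ℝ)..m, 1 / (d₁ + t)) = Real.log ((A/2) / d₁) := by
    have : (∫ t in (0:ℝ)..m, 1 / (d₁ + t)) = ∫ x in (0+d₁)..(m+d₁), 1 / x := by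
      rw [← intervalIntegral.integral_comp_add_right (fun x => 1 / x) d₁]
      simp [add_comm]
    rw [this, zero_add]
    rw [integral_one_div]
    · congr 1; rw [← hmA₁]; ring_nf
    · intro hx
      rw [Set.uIcc_of_le (by linarith : d₁ ≤ m + d₁)] at hx
      nlinarith [hx.1]
  have hc2 : (∫ t in m..l, 1 / (d₂ + (l - t))) = Real.log ((A/2) / d₂) := by
    have : (∫ t in m..l, 1 / (d₂ + (l - t))) = ∫ x in (d₂+l-l)..(d₂+l-m), 1 / x := by
      rw [← intervalIntegral.integral_comp_sub_left (fun x => 1 / x) (d₂ + l)]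
      congr 1; ext t; ring_nf
    rw [this]
    have he : d₂ + l - l = d₂ := by ring
    rw [he, hmA₂, integral_one_div]
    intro hx
    rw [Set.uIcc_of_le (by linarith : d₂ ≤ A/2)] at hx
    nlinarith [hx.1]
  -- combine
  have hsplit : (∫ t in (0:ℝ)..l, 1 / g t) = (∫ t in (0:ℝ)..m, 1 / g t) + ∫ t in m..l, 1 / g t :=
    (intervalIntegral.integral_add_adjacent_intervals hint1 hint2).symm
  have hlog : Real.log (A ^ 2 / (4 * d₁ * d₂)) = Real.log ((A/2)/d₁) + Real.log ((A/2)/d₂) := by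
    rw [← Real.log_mul (by positivity) (by positivity)]
    congr 1; field_simp; ring
  calc Real.log (A ^ 2 / (4 * d₁ * d₂))
      = Real.log ((A/2)/d₁) + Real.log ((A/2)/d₂) := hlog
    _ ≤ (∫ t in (0:ℝ)..m, 1 / g t) + ∫ t in m..l, 1 / g t := by
        rw [← hc1, ← hc2]; exact add_le_add hle1 hle2
    _ = ∫ t in (0:ℝ)..l, 1 / g t := hsplit.symm
end

section
/- Let d₁, d₂, d > 0, 0 ≤ s ≤ l, with |d₁ - d| ≤ s, |d - d₂| ≤ l - s. Then refining with the intermediate sample does not decrease the bound: ln((d₁ + d + s)²/(4 d₁ d)) + ln((d + d₂ + l - s)²/(4 d d₂)) ≥ ln((d₁ + d₂ + l)²/(4 d₁ d₂)). -/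
/-- Refining the two-endpoint heuristic with an intermediate sampled state does
not decrease the bound. -/
theorem refined_bound_tighter
    (d₁ d₂ d s l : ℝ) (hd₁ : 0 < d₁) (hd₂ : 0 < d₂) (hd : 0 < d)
    (hs : 0 ≤ s) (hsl : s ≤ l)
    (h1 : |d₁ - d| ≤ s) (h2 : |d - d₂| ≤ l - s) :
    Real.log ((d₁ + d₂ + l) ^ 2 / (4 * d₁ * d₂)) ≤
      Real.log ((d₁ + d + s) ^ 2 / (4 * d₁ * d)) +
        Real.log ((d + d₂ + (l - s)) ^ 2 / (4 * d * d₂)) := by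
  have hls : 0 ≤ l - s := by linarith
  have hu : d - d₁ ≤ s := by have := (abs_le.mp h1).1; linarith
  have hv : d - d₂ ≤ l - s := (abs_le.mp h2).2
  have hA : 0 < d₁ + d + s := by linarith
  have hB : 0 < d + d₂ + (l - s) := by linarith
  have hden1 : 0 < 4 * d₁ * d := by positivity
  have hden2 : 0 < 4 * d * d₂ := by positivity
  have hx1 : 0 < (d₁ + d + s) ^ 2 / (4 * d₁ * d) := by positivity
  have hx2 : 0 < (d + d₂ + (l - s)) ^ 2 / (4 * d * d₂) := by positivity
  rw [← Real.log_mul (ne_of_gt hx1) (ne_of_gt hx2)]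
  have hL0 : 0 < d₁ + d₂ + l := by linarith
  apply Real.log_le_log (by positivity)
  rw [div_mul_div_comm, div_le_div_iff₀ (by positivity) (by positivity)]
  have key : 2 * d * (d₁ + d₂ + l) ≤ (d₁ + d + s) * (d + d₂ + (l - s)) := by
    nlinarith [mul_nonneg (by linarith : (0:ℝ) ≤ d₁ + s - d)
      (by linarith : (0:ℝ) ≤ d₂ + (l - s) - d)]
  have hL : 0 < d₁ + d₂ + l := by linarith
  nlinarith [mul_le_mul key key (by positivity) (by positivity), sq_nonneg (d₁ + d₂ + l),
    mul_pos hd₁ hd₂, mul_pos hd hd]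
end
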